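/- arXiv:0908.4462 — 4 statements merged into one kernel-verified Lean document; each statement's English description precedes it below -/
import Mathlib

section
/- Let V₁, V₂, V₃, W₀, W₁, W₂ be real vector spaces, let d₁ : V₁ → V₂ and d₂ : V₂ → V₃ be linear maps with d₂ ∘ d₁ = 0, and let δ₂ : W₂ → W₁ and δ₁ : W₁ → W₀ be linear maps with δ₁ ∘ δ₂ = 0. Let Δt > 0 and let E : ℕ → V₁, B : ℕ → V₂, ρₘ : ℕ → V₃, Jₘ : ℕ → V₂, D : ℕ → W₁, H : ℕ → W₂, ρₑ : ℕ → W₀, Jₑ : ℕ → W₁ be sequences satisfying, for every n ∈ ℕ: the discrete Faraday law d₁ (E (n+1)) = -(B (n+1) - B n)/Δt - Jₘ n, the discrete Ampère law δ₂ (H (n+1)) = (D (n+1) - D n)/Δt + Jₑ n, and the discrete continuity equations (ρₘ (n+1) - ρₘ n)/Δt = -d₂ (Jₘ n) and (ρₑ (n+1) - ρₑ n)/Δt = -δ₁ (Jₑ n). If the initial conditions satisfy the constraint equations d₂ (B 0) = ρₘ 0 and δ₁ (D 0) = ρₑ 0, then for every n ∈ ℕ the constraints d₂ (B n) = ρₘ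 n and δ₁ (D n) = ρₑ n hold. (Proposition 1: solutions of the evolution equations of the TE implicit DEC scheme automatically satisfy the full discrete Maxwell's equations.) -/
/-- Proposition 1 (TE implicit DEC scheme): if the initial data satisfy the
constraint equations `d₂ (B 0) = ρₘ 0` and `δ₁ (D 0) = ρₑ 0`, then any solution
of the discrete evolution (Faraday and Ampère) equations together with the
discrete continuity equations satisfies the constraints for all times. -/
theorem te_idec_constraint_propagation
    {V₁ V₂ V₃ W₀ W₁ W₂ : Type*}
    [AddCommGroup V₁] [Module ℝ V₁] [AddCommGroup V₂] [Module ℝ V₂]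
    [AddCommGroup V₃] [Module ℝ V₃] [AddCommGroup W₀] [Module ℝ W₀]
    [AddCommGroup W₁] [Module ℝ W₁] [AddCommGroup W₂] [Module ℝ W₂]
    (d₁ : V₁ →ₗ[ℝ] V₂) (d₂ : V₂ →ₗ[ℝ] V₃)
    (δ₂ : W₂ →ₗ[ℝ] W₁) (δ₁ : W₁ →ₗ[ℝ] W₀)
    (hdd : d₂.comp d₁ = 0) (hδδ : δ₁.comp δ₂ = 0)
    (Δt : ℝ) (hΔt : 0 < Δt)
    (E : ℕ → V₁) (B : ℕ → V₂) (ρₘ : ℕ → V₃) (Jₘ : ℕ → V₂)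
    (D : ℕ → W₁) (H : ℕ → W₂) (ρₑ : ℕ → W₀) (Jₑ : ℕ → W₁)
    (hFaraday : ∀ n : ℕ, d₁ (E (n + 1)) = -(Δt⁻¹ • (B (n + 1) - B n)) - Jₘ n)
    (hAmpere : ∀ n : ℕ, δ₂ (H (n + 1)) = Δt⁻¹ • (D (n + 1) - D n) + Jₑ n)
    (hContM : ∀ n : ℕ, Δt⁻¹ • (ρₘ (n + 1) - ρₘ n) = -(d₂ (Jₘ n)))
    (hContE : ∀ n : ℕ, Δt⁻¹ • (ρₑ (n + 1) - ρₑ n) = -(δ₁ (Jₑ n)))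
    (hB0 : d₂ (B 0) = ρₘ 0) (hD0 : δ₁ (D 0) = ρₑ 0) :
    ∀ n : ℕ, d₂ (B n) = ρₘ n ∧ δ₁ (D n) = ρₑ n := by
  have hne : (Δt⁻¹ : ℝ) ≠ 0 := inv_ne_zero (ne_of_gt hΔt)
  intro n
  induction n with
  | zero => exact ⟨hB0, hD0⟩
  | succ n ih =>
    obtain ⟨ihB, ihD⟩ := ih
    constructor
    · -- apply d₂ to Faraday
      have h1 : (0 : V₃) = -(Δt⁻¹ • (d₂ (B (n + 1)) - d₂ (B n))) - d₂ (Jₘ n) := by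
        have := congrArg d₂ (hFaraday n)
        have h0 : d₂ (d₁ (E (n + 1))) = 0 := by
          have := congrFun (congrArg DFunLike.coe hdd) (E (n + 1))
          simpa using this
        rw [h0] at this
        simpa [map_sub, map_neg, map_smul] using this
      have h2 : Δt⁻¹ • (d₂ (B (n + 1)) - d₂ (B n)) = Δt⁻¹ • (ρₘ (n + 1) - ρₘ n) := by
        rw [hContM n]
        linear_combination (norm := module) h1
      have h3 := smul_right_injective V₃ hne h2
      have := sub_eq_sub_iff_sub_eq_sub.mp h3
      rw [ihB, sub_self] at this
      exact sub_eq_zero.mp this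
    · have h1 : δ₁ (δ₂ (H (n + 1))) = 0 := by
        have := congrFun (congrArg DFunLike.coe hδδ) (H (n + 1))
        simpa using this
      have h2 : Δt⁻¹ • (δ₁ (D (n + 1)) - δ₁ (D n)) = Δt⁻¹ • (ρₑ (n + 1) - ρₑ n) := by
        have ha := congrArg δ₁ (hAmpere n)
        rw [h1, map_add, map_smul, map_sub] at ha
        rw [hContE n]
        linear_combination (norm := module) -ha
      have h3 := smul_right_injective W₀ hne h2
      have := sub_eq_sub_iff_sub_eq_sub.mp h3
      rw [ihD, sub_self] at this
      exact sub_eq_zero.mp this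
end

section
/- Let V₁, V₂, V₃, W₀, W₁, W₂ be real vector spaces, let d₁ : V₁ → V₂ and d₂ : V₂ → V₃ be linear maps with d₂ ∘ d₁ = 0, and let δ₂ : W₂ → W₁ and δ₁ : W₁ → W₀ be linear maps with δ₁ ∘ δ₂ = 0. Let Δt > 0 and let H : ℕ → V₁, D : ℕ → V₂, ρₑ : ℕ → V₃, Jₑ : ℕ → V₂, B : ℕ → W₁, E : ℕ → W₂, ρₘ : ℕ → W₀, Jₘ : ℕ → W₁ be sequences satisfying, for every n ∈ ℕ: the discrete Ampère law d₁ (H (n+1)) = (D (n+1) - D n)/Δt + Jₑ n, the discrete Faraday law δ₂ (E (n+1)) = -(B (n+1) - B n)/Δt - Jₘ n, and the discrete continuity equations (ρₑ (n+1) - ρₑ n)/Δt = -d₂ (Jₑ n) and (ρₘ (n+1) - ρₘ n)/Δt = -δ₁ (Jₘ n). If the initial conditions satisfy the constraint equations d₂ (D 0) = ρₑ 0 and δ₁ (B 0) = ρₘ 0, then for every n ∈ ℕ the constraints d₂ (D n) = ρₑ n and δ₁ (B n) = ρₘ n hold. (Proposition 2: solutions of the evolution equations of the TM implicit DEC scheme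 automatically satisfy the full discrete Maxwell's equations.) -/
/-- Proposition 2 (TM implicit DEC scheme): if the initial data satisfy the
constraint equations `d₂ (D 0) = ρₑ 0` and `δ₁ (B 0) = ρₘ 0`, then any solution
of the discrete evolution (Ampère and Faraday) equations together with the
discrete continuity equations satisfies the constraints for all times. -/
theorem tm_idec_constraint_propagation
    {V₁ V₂ V₃ W₀ W₁ W₂ : Type*}
    [AddCommGroup V₁] [Module ℝ V₁] [AddCommGroup V₂] [Module ℝ V₂]
    [AddCommGroup V₃] [Module ℝ V₃] [AddCommGroup W₀] [Module ℝ W₀]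
    [AddCommGroup W₁] [Module ℝ W₁] [AddCommGroup W₂] [Module ℝ W₂]
    (d₁ : V₁ →ₗ[ℝ] V₂) (d₂ : V₂ →ₗ[ℝ] V₃)
    (δ₂ : W₂ →ₗ[ℝ] W₁) (δ₁ : W₁ →ₗ[ℝ] W₀)
    (hdd : d₂.comp d₁ = 0) (hδδ : δ₁.comp δ₂ = 0)
    (Δt : ℝ) (hΔt : 0 < Δt)
    (H : ℕ → V₁) (D : ℕ → V₂) (ρₑ : ℕ → V₃) (Jₑ : ℕ → V₂)
    (B : ℕ → W₁) (E : ℕ → W₂) (ρₘ : ℕ → W₀) (Jₘ : ℕ → W₁)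
    (hAmpere : ∀ n : ℕ, d₁ (H (n + 1)) = Δt⁻¹ • (D (n + 1) - D n) + Jₑ n)
    (hFaraday : ∀ n : ℕ, δ₂ (E (n + 1)) = -(Δt⁻¹ • (B (n + 1) - B n)) - Jₘ n)
    (hContE : ∀ n : ℕ, Δt⁻¹ • (ρₑ (n + 1) - ρₑ n) = -(d₂ (Jₑ n)))
    (hContM : ∀ n : ℕ, Δt⁻¹ • (ρₘ (n + 1) - ρₘ n) = -(δ₁ (Jₘ n)))
    (hD0 : d₂ (D 0) = ρₑ 0) (hB0 : δ₁ (B 0) = ρₘ 0) :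
    ∀ n : ℕ, d₂ (D n) = ρₑ n ∧ δ₁ (B n) = ρₘ n := by
  have hne : (Δt⁻¹ : ℝ) ≠ 0 := inv_ne_zero hΔt.ne'
  intro n
  induction n with
  | zero => exact ⟨hD0, hB0⟩
  | succ n ih =>
    obtain ⟨ihD, ihB⟩ := ih
    constructor
    · have h1 : d₂ (d₁ (H (n + 1))) = 0 := by
        rw [← LinearMap.comp_apply, hdd]; rfl
      rw [hAmpere n, map_add, map_smul, map_sub] at h1
      have h2 : Δt⁻¹ • (d₂ (D (n + 1)) - d₂ (D n)) = Δt⁻¹ • (ρₑ (n + 1) - ρₑ n) := by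
        rw [hContE n]
        linear_combination (norm := module) h1
      have h3 := smul_right_injective V₃ hne h2
      rw [ihD] at h3
      exact sub_left_injective h3
    · have h1 : δ₁ (δ₂ (E (n + 1))) = 0 := by
        rw [← LinearMap.comp_apply, hδδ]; rfl
      rw [hFaraday n, map_sub, map_neg, map_smul, map_sub] at h1
      have h2 : Δt⁻¹ • (δ₁ (B (n + 1)) - δ₁ (B n)) = Δt⁻¹ • (ρₘ (n + 1) - ρₘ n) := by
        rw [hContM n]
        linear_combination (norm := module) -h1
      have h3 := smul_right_injective W₀ hne h2
      rw [ihB] at h3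
      exact sub_left_injective h3
end

section
/- Let M be a real number with M ≥ 0. Then every complex number ξ satisfying the amplification polynomial equation (1 + M)·ξ² − 2·ξ + 1 = 0 has modulus |ξ| = 1/√(1 + M); in particular |ξ| ≤ 1. -/
open Complex

/-! Completing the square turns `(1 + M)ξ² − 2ξ + 1 = 0` into `((1 + M)ξ − 1)² = −M`.
A square root of a nonpositive real is purely imaginary, so `(1 + M)ξ = 1 + w` with
`w.re = 0` and `|w|² = M`, whence `(1 + M)² |ξ|² = 1 + M`. -/

namespace Complex

theorem re_eq_zero_of_sq_eq_neg_ofReal {w : ℂ} {r : ℝ} (hr : 0 ≤ r) (h : w ^ 2 = -(r : ℂ)) :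
    w.re = 0 := by
  have hre : w.re ^ 2 - w.im ^ 2 = -r := by simpa [sq] using congrArg re h
  have him : w.re * w.im = 0 := by simpa [sq, mul_comm] using congrArg im h
  rcases mul_eq_zero.mp him with hw | hw
  · exact hw
  · rw [hw] at hre
    nlinarith [sq_nonneg w.re]

theorem normSq_one_add_of_sq_eq_neg_ofReal {w : ℂ} {r : ℝ} (hr : 0 ≤ r) (h : w ^ 2 = -(r : ℂ)) :
    normSq (1 + w) = 1 + r := by
  have hre := re_eq_zero_of_sq_eq_neg_ofReal hr h
  have him : w.im ^ 2 = r := by simpa [sq, hre] using congrArg re h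
  simp [normSq_apply, hre, ← him, sq]

end Complex

theorem normSq_eq_inv_of_idec_quadratic {M : ℝ} (hM : 0 ≤ M) {ξ : ℂ}
    (hξ : (1 + (M : ℂ)) * ξ ^ 2 - 2 * ξ + 1 = 0) :
    normSq ξ = (1 + M)⁻¹ := by
  have hpos : 0 < 1 + M := by linarith
  have hsquare : ((1 + M : ℝ) * ξ - 1) ^ 2 = -(M : ℂ) := by
    push_cast
    linear_combination (1 + (M : ℂ)) * hξ
  have hscaled := normSq_one_add_of_sq_eq_neg_ofReal hM hsquare
  rw [add_sub_cancel, normSq_mul, normSq_ofReal] at hscaled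
  refine eq_inv_of_mul_eq_one_left (mul_left_cancel₀ hpos.ne' ?_)
  linear_combination hscaled

/-- Every root `ξ` of the amplification polynomial `(1 + M)ξ² − 2ξ + 1` of the
IDEC scheme, with `M ≥ 0`, has modulus `1/√(1 + M)`; in particular `|ξ| ≤ 1`. -/
theorem idec_growth_factor_modulus (M : ℝ) (hM : M ≥ 0) (ξ : ℂ)
    (hξ : (1 + (M : ℂ)) * ξ ^ 2 - 2 * ξ + 1 = 0) :
    ‖ξ‖ = 1 / Real.sqrt (1 + M) ∧ ‖ξ‖ ≤ 1 := by
  have hmod : ‖ξ‖ = 1 / Real.sqrt (1 + M) := by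
    rw [norm_def, normSq_eq_inv_of_idec_quadratic hM hξ, Real.sqrt_inv, one_div]
  refine ⟨hmod, ?_⟩
  rw [hmod, div_le_one (by positivity), Real.one_le_sqrt]
  linarith
end

section
/- Let ε > 0, μ > 0, Δt > 0, |P₁| > 0 be real numbers, let k be a real number, and for i = 1, 2, 3 let |eᵢ| > 0 and |*eᵢ| > 0 be real numbers. Let ξ, H₁, E₁, E₂, E₃ be complex numbers with H₁ ≠ 0 satisfying the amplification-relation system: for each i = 1, 2, 3, Eᵢ·ξ = Eᵢ + (Δt/(ε·|*eᵢ|))·(1 − cos(k·|*eᵢ|))·H₁·ξ, and H₁·ξ = H₁ − (Δt/(μ·|P₁|))·(E₁·|e₁| + E₂·|e₂| + E₃·|e₃|)·ξ. Then ξ satisfies (1 + M)·ξ² − 2·ξ + 1 = 0, where M := (Δt²/(ε·μ·|P₁|)) · Σᵢ₌₁³ (1 − cos(k·|*eᵢ|))·(|eᵢ|/|*eᵢ|). -/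
open Complex

/-- Substituting the plane-wave ansatz into the implicit DEC scheme for the TE
wave: if the growth factor `ξ` and the amplitudes `E i`, `H₁` (with `H₁ ≠ 0`)
satisfy the amplification-relation system, then `ξ` is a root of the
amplification polynomial `(1 + M)ξ² − 2ξ + 1`, where
`M = (Δt²/(εμ|P₁|)) Σᵢ (1 − cos(k|*eᵢ|))(|eᵢ|/|*eᵢ|)`. -/
theorem idec_growth_factor_quadratic
    (ε μ Δt P₁ k : ℝ) (hε : 0 < ε) (hμ : 0 < μ) (hΔt : 0 < Δt) (hP₁ : 0 < P₁)
    (e de : Fin 3 → ℝ) (he : ∀ i, 0 < e i) (hde : ∀ i, 0 < de i)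
    (ξ H₁ : ℂ) (E : Fin 3 → ℂ) (hH₁ : H₁ ≠ 0)
    (hE : ∀ i : Fin 3,
      E i * ξ = E i + ((Δt / (ε * de i) : ℝ) : ℂ) *
        ((1 - Real.cos (k * de i) : ℝ) : ℂ) * H₁ * ξ)
    (hH : H₁ * ξ = H₁ - ((Δt / (μ * P₁) : ℝ) : ℂ) *
        (E 0 * ((e 0 : ℝ) : ℂ) + E 1 * ((e 1 : ℝ) : ℂ) + E 2 * ((e 2 : ℝ) : ℂ)) * ξ) :
    (1 + ((Δt ^ 2 / (ε * μ * P₁) *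
        ∑ i : Fin 3, (1 - Real.cos (k * de i)) * (e i / de i) : ℝ) : ℂ)) * ξ ^ 2
      - 2 * ξ + 1 = 0 := by
  have hM : (Δt ^ 2 / (ε * μ * P₁) *
      ∑ i : Fin 3, (1 - Real.cos (k * de i)) * (e i / de i) : ℝ)
      = Δt / (μ * P₁) * (Δt / (ε * de 0) * (1 - Real.cos (k * de 0)) * e 0
        + Δt / (ε * de 1) * (1 - Real.cos (k * de 1)) * e 1
        + Δt / (ε * de 2) * (1 - Real.cos (k * de 2)) * e 2) := by
    rw [Fin.sum_univ_three]
    have h0 := (hde 0).ne'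
    have h1 := (hde 1).ne'
    have h2 := (hde 2).ne'
    field_simp
  have key : H₁ * ((1 + ((Δt ^ 2 / (ε * μ * P₁) *
      ∑ i : Fin 3, (1 - Real.cos (k * de i)) * (e i / de i) : ℝ) : ℂ)) * ξ ^ 2
      - 2 * ξ + 1) = 0 := by
    have e0 := hE 0
    have e1 := hE 1
    have e2 := hE 2
    rw [hM]
    push_cast at e0 e1 e2 hH ⊢
    linear_combination (ξ - 1) * hH
      - ((Δt : ℂ) / ((μ : ℂ) * (P₁ : ℂ)) * ξ) *
        ((e 0 : ℂ) * e0 + (e 1 : ℂ) * e1 + (e 2 : ℂ) * e2)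
  rcases mul_eq_zero.mp key with h | h
  · exact absurd h hH₁
  · exact h
end
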